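/- Let G be a commutative group, let r ≥ 1, and let (σ₁, σ₁'), …, (σ_r, σ_r') be pairs of elements of G with σᵢ² = 1 and (σᵢ')² = 1 for all i. In A ⊗ A, where A = ℂ[G], set 𝒯 := ∏_{i=1}^{r} x_{σᵢ,σᵢ'} and 𝒥 := (1/2^r) · 𝒯. Then: (i) (Δ ⊗ id)(𝒥) · (𝒥 ⊗ 1) = (id ⊗ Δ)(𝒥) · (1 ⊗ 𝒥) in A ⊗ A ⊗ A; (ii) (ε ⊗ id)(𝒥) = 1 and (id ⊗ ε)(𝒥) = 1 in A; (iii) 𝒥 · 𝒥 = 1 ⊗ 1, so 𝒥 is invertible with 𝒥⁻¹ = 𝒥. -/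

import Mathlib

/-!
Each factor is `x = 1 + a + d - a d` with `a = σ ⊗ 1` and `d = 1 ⊗ σ'` commuting involutions.
All algebras involved are commutative and all maps applied to `𝒥` are algebra homomorphisms, so
every identity splits into factorwise ones: the counits send `x` to `2`, `x² = 4`, and the
cocycle identity for a single factor is a polynomial identity in commuting variables that holds
modulo `a² = d² = 1`. The normalisation `2⁻ʳ` then cancels exactly.
-/

open scoped TensorProduct

noncomputable section

variable (G : Type*) [CommGroup G]

/-- The comultiplication of the group Hopf algebra `ℂ[G]`, determined by `Δ(g) = g ⊗ g`. -/
def Delta : MonoidAlgebra ℂ G →ₐ[ℂ] MonoidAlgebra ℂ G ⊗[ℂ] MonoidAlgebra ℂ G :=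
  MonoidAlgebra.lift ℂ _ G
    { toFun := fun g => MonoidAlgebra.of ℂ G g ⊗ₜ[ℂ] MonoidAlgebra.of ℂ G g
      map_one' := by simp [Algebra.TensorProduct.one_def, MonoidAlgebra.one_def]
      map_mul' := fun g h => by
        simp [Algebra.TensorProduct.tmul_mul_tmul, map_mul] }

/-- The counit of the group Hopf algebra `ℂ[G]`, determined by `ε(g) = 1`. -/
def counitCG : MonoidAlgebra ℂ G →ₐ[ℂ] ℂ :=
  MonoidAlgebra.lift ℂ ℂ G 1

/-- The element `x_{σ,σ'} = (1+σ) ⊗ 1 + (1−σ) ⊗ σ'` of `ℂ[G] ⊗ ℂ[G]`. -/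
def xEl (σ σ' : G) : MonoidAlgebra ℂ G ⊗[ℂ] MonoidAlgebra ℂ G :=
  (1 + MonoidAlgebra.of ℂ G σ) ⊗ₜ[ℂ] 1 +
    (1 - MonoidAlgebra.of ℂ G σ) ⊗ₜ[ℂ] MonoidAlgebra.of ℂ G σ'

local notation "𝔸" => MonoidAlgebra ℂ G

section TwistFactor

variable {R : Type*} [CommRing R]

/-- With `a = σ ⊗ 1` and `d = 1 ⊗ σ'` this is `x_{σ,σ'} = (1 + a) + (1 - a) d`. -/
def twistFactor (a d : R) : R := 1 + a + d - a * d

lemma map_twistFactor {S F : Type*} [CommRing S] [FunLike F R S] [RingHomClass F R S]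
    (f : F) (a d : R) : f (twistFactor a d) = twistFactor (f a) (f d) := by
  simp only [twistFactor, map_add, map_sub, map_mul, map_one]

lemma twistFactor_one_left (d : R) : twistFactor 1 d = 2 := by
  rw [twistFactor]; ring

lemma twistFactor_one_right (a : R) : twistFactor a 1 = 2 := by
  rw [twistFactor]; ring

lemma twistFactor_mul_self {a d : R} (ha : a ^ 2 = 1) (hd : d ^ 2 = 1) :
    twistFactor a d * twistFactor a d = 4 := by
  rw [twistFactor]
  linear_combination (1 - 2 * d + d ^ 2) * ha + (2 - 2 * a) * hd

lemma twistFactor_cocycle {a d : R} (b c : R) (ha : a ^ 2 = 1) (hd : d ^ 2 = 1) :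
    twistFactor (a * b) d * twistFactor a c = twistFactor a (c * d) * twistFactor b d := by
  simp only [twistFactor]
  linear_combination (b - b * c - b * d + b * c * d) * ha + (-c + b * c + a * c - a * b * c) * hd

end TwistFactor

lemma Finset.map_smul_prod_mul_map_smul_prod {R A B ι : Type*} [CommSemiring R] [CommSemiring A]
    [Algebra R A] [CommSemiring B] [Algebra R B] (f g f' g' : A →ₐ[R] B) (c : R)
    (s : Finset ι) (x : ι → A) (h : ∀ i ∈ s, f (x i) * g (x i) = f' (x i) * g' (x i)) :
    f (c • ∏ i ∈ s, x i) * g (c • ∏ i ∈ s, x i) =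
      f' (c • ∏ i ∈ s, x i) * g' (c • ∏ i ∈ s, x i) := by
  simp only [map_smul, map_prod, smul_mul_smul_comm, ← Finset.prod_mul_distrib]
  rw [Finset.prod_congr rfl h]

lemma inv_two_pow_smul_two_pow {K A : Type*} [Field K] [NeZero (2 : K)] [Semiring A]
    [Algebra K A] (r : ℕ) : ((2 : K) ^ r)⁻¹ • (2 : A) ^ r = 1 := by
  rw [← map_ofNat (algebraMap K A) 2, ← map_pow, Algebra.smul_def, ← map_mul,
    inv_mul_cancel₀ (pow_ne_zero r two_ne_zero), map_one]

lemma Algebra.TensorProduct.tmul_sq_eq_one {R A B : Type*} [CommSemiring R] [Semiring A]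
    [Algebra R A] [Semiring B] [Algebra R B] {a : A} {b : B} (ha : a ^ 2 = 1) (hb : b ^ 2 = 1) :
    (a ⊗ₜ[R] b) ^ 2 = 1 := by
  rw [Algebra.TensorProduct.tmul_pow, ha, hb, Algebra.TensorProduct.one_def]

section GroupAlgebra

open MonoidAlgebra

variable {G}

lemma Delta_of (g : G) : Delta G (of ℂ G g) = of ℂ G g ⊗ₜ[ℂ] of ℂ G g := by
  simp [Delta]

lemma counitCG_of (g : G) : counitCG G (of ℂ G g) = 1 := by
  simp [counitCG]

lemma of_sq_eq_one {g : G} (h : g ^ 2 = 1) : of ℂ G g ^ 2 = 1 := by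
  rw [← map_pow, h, map_one]

lemma xEl_eq_twistFactor (s s' : G) :
    xEl G s s' = twistFactor (of ℂ G s ⊗ₜ[ℂ] (1 : 𝔸)) ((1 : 𝔸) ⊗ₜ[ℂ] of ℂ G s') := by
  simp only [xEl, twistFactor, TensorProduct.add_tmul, TensorProduct.sub_tmul,
    Algebra.TensorProduct.tmul_mul_tmul, one_mul, mul_one, Algebra.TensorProduct.one_def]
  abel

lemma xEl_mul_self {s s' : G} (hs : s ^ 2 = 1) (hs' : s' ^ 2 = 1) :
    xEl G s s' * xEl G s s' = 4 := by
  rw [xEl_eq_twistFactor]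
  exact twistFactor_mul_self (Algebra.TensorProduct.tmul_sq_eq_one (of_sq_eq_one hs) (one_pow 2))
    (Algebra.TensorProduct.tmul_sq_eq_one (one_pow 2) (of_sq_eq_one hs'))

lemma counitCG_tensor_id_xEl (s s' : G) :
    Algebra.TensorProduct.lid ℂ 𝔸
      (Algebra.TensorProduct.map (counitCG G) (AlgHom.id ℂ 𝔸) (xEl G s s')) = 2 := by
  rw [xEl_eq_twistFactor, map_twistFactor, map_twistFactor]
  simp only [Algebra.TensorProduct.map_tmul, counitCG_of, map_one, AlgHom.coe_id, id_eq,
    Algebra.TensorProduct.lid_tmul, one_smul, twistFactor_one_left]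

lemma id_tensor_counitCG_xEl (s s' : G) :
    Algebra.TensorProduct.rid ℂ ℂ 𝔸
      (Algebra.TensorProduct.map (AlgHom.id ℂ 𝔸) (counitCG G) (xEl G s s')) = 2 := by
  rw [xEl_eq_twistFactor, map_twistFactor, map_twistFactor]
  simp only [Algebra.TensorProduct.map_tmul, counitCG_of, map_one, AlgHom.coe_id, id_eq,
    Algebra.TensorProduct.rid_tmul, one_smul, twistFactor_one_right]

lemma xEl_cocycle {s s' : G} (hs : s ^ 2 = 1) (hs' : s' ^ 2 = 1) :
    Algebra.TensorProduct.assoc ℂ ℂ ℂ 𝔸 𝔸 𝔸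
        (Algebra.TensorProduct.map (Delta G) (AlgHom.id ℂ 𝔸) (xEl G s s')) *
      Algebra.TensorProduct.assoc ℂ ℂ ℂ 𝔸 𝔸 𝔸 (xEl G s s' ⊗ₜ[ℂ] (1 : 𝔸)) =
    Algebra.TensorProduct.map (AlgHom.id ℂ 𝔸) (Delta G) (xEl G s s') *
      ((1 : 𝔸) ⊗ₜ[ℂ] xEl G s s') := by
  rw [← Algebra.TensorProduct.includeLeft_apply (S := ℂ),
    ← Algebra.TensorProduct.includeRight_apply, xEl_eq_twistFactor]
  simp only [map_twistFactor, Algebra.TensorProduct.map_tmul, Delta_of, map_one, AlgHom.coe_id,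
    id_eq, Algebra.TensorProduct.includeLeft_apply, Algebra.TensorProduct.includeRight_apply,
    Algebra.TensorProduct.assoc_tmul]
  have key := twistFactor_cocycle (R := 𝔸 ⊗[ℂ] (𝔸 ⊗[ℂ] 𝔸))
    (a := of ℂ G s ⊗ₜ 1) (d := 1 ⊗ₜ (1 ⊗ₜ of ℂ G s'))
    (b := 1 ⊗ₜ (of ℂ G s ⊗ₜ 1)) (c := 1 ⊗ₜ (of ℂ G s' ⊗ₜ 1))
    (Algebra.TensorProduct.tmul_sq_eq_one (of_sq_eq_one hs) (one_pow 2))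
    (Algebra.TensorProduct.tmul_sq_eq_one (one_pow 2)
      (Algebra.TensorProduct.tmul_sq_eq_one (one_pow 2) (of_sq_eq_one hs')))
  simp only [Algebra.TensorProduct.tmul_mul_tmul, one_mul, mul_one, Algebra.TensorProduct.one_def,
    Algebra.TensorProduct.assoc_tmul] at key ⊢
  exact key

end GroupAlgebra

theorem twist_J (r : ℕ) (σ σ' : Fin r → G)
    (hσ : ∀ i, σ i ^ 2 = 1) (hσ' : ∀ i, σ' i ^ 2 = 1) :
    ∀ 𝒥 : MonoidAlgebra ℂ G ⊗[ℂ] MonoidAlgebra ℂ G,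
      𝒥 = ((2 : ℂ) ^ r)⁻¹ • (∏ i : Fin r, xEl G (σ i) (σ' i)) →
      (Algebra.TensorProduct.assoc ℂ ℂ ℂ (MonoidAlgebra ℂ G) (MonoidAlgebra ℂ G)
            (MonoidAlgebra ℂ G)
          ((Algebra.TensorProduct.map (Delta G) (AlgHom.id ℂ (MonoidAlgebra ℂ G))) 𝒥 *
            (𝒥 ⊗ₜ[ℂ] (1 : MonoidAlgebra ℂ G))) =
        (Algebra.TensorProduct.map (AlgHom.id ℂ (MonoidAlgebra ℂ G)) (Delta G)) 𝒥 *
          ((1 : MonoidAlgebra ℂ G) ⊗ₜ[ℂ] 𝒥)) ∧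
      (Algebra.TensorProduct.lid ℂ (MonoidAlgebra ℂ G)
          ((Algebra.TensorProduct.map (counitCG G) (AlgHom.id ℂ (MonoidAlgebra ℂ G))) 𝒥) = 1) ∧
      (Algebra.TensorProduct.rid ℂ ℂ (MonoidAlgebra ℂ G)
          ((Algebra.TensorProduct.map (AlgHom.id ℂ (MonoidAlgebra ℂ G)) (counitCG G)) 𝒥) = 1) ∧
      𝒥 * 𝒥 = (1 : MonoidAlgebra ℂ G) ⊗ₜ[ℂ] (1 : MonoidAlgebra ℂ G) := by
  rintro _ rfl
  refine ⟨?cocycle, ?counit_left, ?counit_right, ?square⟩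
  case cocycle =>
    rw [map_mul]
    refine Finset.map_smul_prod_mul_map_smul_prod (B := 𝔸 ⊗[ℂ] (𝔸 ⊗[ℂ] 𝔸))
      ((Algebra.TensorProduct.assoc ℂ ℂ ℂ 𝔸 𝔸 𝔸).toAlgHom.comp
        (Algebra.TensorProduct.map (Delta G) (AlgHom.id ℂ 𝔸)))
      ((Algebra.TensorProduct.assoc ℂ ℂ ℂ 𝔸 𝔸 𝔸).toAlgHom.comp Algebra.TensorProduct.includeLeft)
      (Algebra.TensorProduct.map (AlgHom.id ℂ 𝔸) (Delta G)) Algebra.TensorProduct.includeRight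
      _ _ _ fun i _ => ?_
    exact xEl_cocycle (hσ i) (hσ' i)
  case counit_left =>
    simp only [map_smul, map_prod, counitCG_tensor_id_xEl, Finset.prod_const, Finset.card_fin]
    exact inv_two_pow_smul_two_pow r
  case counit_right =>
    simp only [map_smul, map_prod, id_tensor_counitCG_xEl, Finset.prod_const, Finset.card_fin]
    exact inv_two_pow_smul_two_pow r
  case square =>
    rw [smul_mul_smul_comm, ← Finset.prod_mul_distrib]
    simp only [xEl_mul_self (hσ _) (hσ' _), Finset.prod_const, Finset.card_fin]
    rw [show (4 : 𝔸 ⊗[ℂ] 𝔸) = 2 * 2 by norm_num, mul_pow, ← smul_mul_smul_comm,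
      inv_two_pow_smul_two_pow, one_mul, Algebra.TensorProduct.one_def]
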